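/- Let F be a field, let m and n be positive integers, and let d₁ : Fin m → Fˣ and d₂ : Fin n → Fˣ be non-constant functions. Suppose that the Kronecker product M = M₁ ⊗ M₂ of M₁ = diag(d₁) and M₂ = diag(d₂) (the diagonal matrix with (i,j) entry d₁(i)·d₂(j)) has almost simple spectrum, i.e. there is at most one c ∈ F with #{(i,j) : d₁(i)·d₂(j) = c} ≥ 2. Suppose further that each Mᵢ is similar to its inverse, i.e. the multiset of values of d₁ is invariant under x ↦ x⁻¹, and likewise for d₂. Then every eigenvalue of M has multiplicity at most 2: for every c ∈ F, #{(i,j) : d₁(i)·d₂(j) = c} ≤ 2. -/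
import Mathlib


open scoped Classical in
/-- **Lemma 2.1(2).** Suppose the Kronecker product of two non-scalar diagonal matrices
`diag d₁` and `diag d₂` has almost simple spectrum, and each factor is similar to its
inverse (the multiset of its diagonal entries is invariant under inversion). Then every
eigenvalue of the Kronecker product has multiplicity at most 2. -/
theorem kronecker_almost_simple_spectrum_mult_le_two
    {F : Type*} [Field F] {m n : ℕ} (hm : 0 < m) (hn : 0 < n)
    (d₁ : Fin m → Fˣ) (d₂ : Fin n → Fˣ)
    (hd₁ : ¬ ∃ c : Fˣ, ∀ i, d₁ i = c) (hd₂ : ¬ ∃ c : Fˣ, ∀ j, d₂ j = c)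
    (hAS : ∀ c c' : F,
      2 ≤ (Finset.univ.filter
        (fun p : Fin m × Fin n => ((d₁ p.1 : F) * (d₂ p.2 : F)) = c)).card →
      2 ≤ (Finset.univ.filter
        (fun p : Fin m × Fin n => ((d₁ p.1 : F) * (d₂ p.2 : F)) = c')).card →
      c = c')
    (hinv₁ : Multiset.map d₁ Finset.univ.val =
      Multiset.map (fun i => (d₁ i)⁻¹) Finset.univ.val)
    (hinv₂ : Multiset.map d₂ Finset.univ.val =
      Multiset.map (fun j => (d₂ j)⁻¹) Finset.univ.val) :
    ∀ c : F,
      (Finset.univ.filter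
        (fun p : Fin m × Fin n => ((d₁ p.1 : F) * (d₂ p.2 : F)) = c)).card ≤ 2 := by
  intro c
  by_contra hcard
  push_neg at hcard
  -- membership in the filter, phrased with units
  have hmem : ∀ (x : Fˣ) (p : Fin m × Fin n),
      p ∈ Finset.univ.filter
        (fun p : Fin m × Fin n => ((d₁ p.1 : F) * (d₂ p.2 : F)) = (x : F)) ↔
      d₁ p.1 * d₂ p.2 = x := by
    intro x p
    simp [Finset.mem_filter, ← Units.val_mul, Units.ext_iff]
  -- extract three distinct pairs
  obtain ⟨p₁, p₂, p₃, hp₁m, hp₂m, hp₃m, h12, h13, h23⟩ :=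
    Finset.two_lt_card_iff.mp hcard
  have hp₁c : ((d₁ p₁.1 : F) * (d₂ p₁.2 : F)) = c := (Finset.mem_filter.mp hp₁m).2
  set cu : Fˣ := d₁ p₁.1 * d₂ p₁.2 with hcu_def
  have hcu : (cu : F) = c := by rw [← hp₁c]; simp [hcu_def]
  rw [← hcu] at hcard hp₁m hp₂m hp₃m
  have hp₁ : d₁ p₁.1 * d₂ p₁.2 = cu := (hmem cu p₁).mp hp₁m
  have hp₂ : d₁ p₂.1 * d₂ p₂.2 = cu := (hmem cu p₂).mp hp₂m
  have hp₃ : d₁ p₃.1 * d₂ p₃.2 = cu := (hmem cu p₃).mp hp₃m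
  -- if some eigenvalue has multiplicity ≥ 2, it must be cu
  have heq : ∀ (x : Fˣ) (q₁ q₂ : Fin m × Fin n), q₁ ≠ q₂ →
      d₁ q₁.1 * d₂ q₁.2 = x → d₁ q₂.1 * d₂ q₂.2 = x → x = cu := by
    intro x q₁ q₂ hq hq₁ hq₂
    have h2 : 2 ≤ (Finset.univ.filter
        (fun p : Fin m × Fin n => ((d₁ p.1 : F) * (d₂ p.2 : F)) = (x : F))).card := by
      rw [Nat.succ_le_iff, Finset.one_lt_card]
      exact ⟨q₁, (hmem x q₁).mpr hq₁, q₂, (hmem x q₂).mpr hq₂, hq⟩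
    have := hAS (x : F) (cu : F) h2 (le_of_lt hcard)
    exact Units.ext this
  -- inversion invariance: inverses of attained values are attained
  have hc₁ : ∀ i : Fin m, ∃ i', d₁ i' = (d₁ i)⁻¹ := by
    intro i
    have hmemm : (d₁ i)⁻¹ ∈ Multiset.map (fun i => (d₁ i)⁻¹) Finset.univ.val := by
      exact Multiset.mem_map.mpr ⟨i, by simp⟩
    rw [← hinv₁] at hmemm
    obtain ⟨i', _, hi'⟩ := Multiset.mem_map.mp hmemm
    exact ⟨i', hi'⟩
  have hc₂ : ∀ j : Fin n, ∃ j', d₂ j' = (d₂ j)⁻¹ := by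
    intro j
    have hmemm : (d₂ j)⁻¹ ∈ Multiset.map (fun j => (d₂ j)⁻¹) Finset.univ.val := by
      exact Multiset.mem_map.mpr ⟨j, by simp⟩
    rw [← hinv₂] at hmemm
    obtain ⟨j', _, hj'⟩ := Multiset.mem_map.mp hmemm
    exact ⟨j', hj'⟩
  -- nonconstancy
  push_neg at hd₁ hd₂
  obtain ⟨i₀, hi₀⟩ := hd₁ (d₁ ⟨0, hm⟩)
  obtain ⟨j₀, hj₀⟩ := hd₂ (d₂ ⟨0, hn⟩)
  -- d₂ is injective
  have hinj₂ : Function.Injective d₂ := by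
    intro j j' hjj'
    by_contra hne
    have hor : d₁ i₀ * d₂ j ≠ cu ∨ d₁ ⟨0, hm⟩ * d₂ j ≠ cu := by
      by_contra hh
      push_neg at hh
      exact hi₀ (mul_right_cancel (hh.1.trans hh.2.symm))
    rcases hor with hx | hx
    · exact hx (heq _ (i₀, j) (i₀, j') (by simp [hne]) rfl (by simp [← hjj']))
    · exact hx (heq _ (⟨0, hm⟩, j) (⟨0, hm⟩, j') (by simp [hne]) rfl (by simp [← hjj']))
  -- d₁ is injective
  have hinj₁ : Function.Injective d₁ := by
    intro i i' hii'
    by_contra hne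
    have hor : d₁ i * d₂ j₀ ≠ cu ∨ d₁ i * d₂ ⟨0, hn⟩ ≠ cu := by
      by_contra hh
      push_neg at hh
      exact hj₀ (mul_left_cancel (hh.1.trans hh.2.symm))
    rcases hor with hx | hx
    · exact hx (heq _ (i, j₀) (i', j₀) (by simp [hne]) rfl (by simp [← hii']))
    · exact hx (heq _ (i, ⟨0, hn⟩) (i', ⟨0, hn⟩) (by simp [hne]) rfl (by simp [← hii']))
  -- the first coordinates of the three pairs are pairwise distinct
  have hfst : ∀ q q' : Fin m × Fin n, q ≠ q' →
      d₁ q.1 * d₂ q.2 = cu → d₁ q'.1 * d₂ q'.2 = cu → q.1 ≠ q'.1 := by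
    intro q q' hq hq1 hq2 hff
    apply hq
    have : d₂ q.2 = d₂ q'.2 := by
      have := hq1.trans hq2.symm
      rw [hff] at this
      exact mul_left_cancel this
    exact Prod.ext hff (hinj₂ this)
  have hi12 : p₁.1 ≠ p₂.1 := hfst p₁ p₂ h12 hp₁ hp₂
  have hi13 : p₁.1 ≠ p₃.1 := hfst p₁ p₃ h13 hp₁ hp₃
  have hi23 : p₂.1 ≠ p₃.1 := hfst p₂ p₃ h23 hp₂ hp₃
  have ha12 : d₁ p₁.1 ≠ d₁ p₂.1 := fun h => hi12 (hinj₁ h)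
  have ha13 : d₁ p₁.1 ≠ d₁ p₃.1 := fun h => hi13 (hinj₁ h)
  -- cu is its own inverse
  obtain ⟨i₁', hi₁'⟩ := hc₁ p₁.1
  obtain ⟨i₂', hi₂'⟩ := hc₁ p₂.1
  obtain ⟨j₁', hj₁'⟩ := hc₂ p₁.2
  obtain ⟨j₂', hj₂'⟩ := hc₂ p₂.2
  have hcusq : cu⁻¹ = cu := by
    apply heq cu⁻¹ (i₁', j₁') (i₂', j₂')
    · intro h
      apply ha12
      have hii : i₁' = i₂' := congrArg Prod.fst h
      have : (d₁ p₁.1)⁻¹ = (d₁ p₂.1)⁻¹ := by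
        rw [← hi₁', ← hi₂', hii]
      exact inv_injective this
    · simp only [hi₁', hj₁', ← mul_inv, hp₁]
    · simp only [hi₂', hj₂', ← mul_inv, hp₂]
  -- final contradiction: a₂ = a₁⁻¹ = a₃
  have key : ∀ q : Fin m × Fin n, q ≠ p₁ → d₁ q.1 * d₂ q.2 = cu →
      d₁ q.1 = (d₁ p₁.1)⁻¹ := by
    intro q hq hqcu
    obtain ⟨jq', hjq'⟩ := hc₂ q.2
    have hiq : p₁.1 ≠ q.1 := hfst p₁ q (Ne.symm hq) hp₁ hqcu
    have hb₁ : d₂ p₁.2 = (d₁ p₁.1)⁻¹ * cu := by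
      rw [← hp₁]; group
    have hbq : d₂ q.2 = (d₁ q.1)⁻¹ * cu := by
      rw [← hqcu]; group
    -- two distinct pairs with product d₁ p₁.1 * d₁ q.1 * cu
    have hv : d₁ p₁.1 * d₁ q.1 * cu = cu := by
      apply heq _ (p₁.1, jq') (q.1, j₁')
      · intro h
        exact hiq (Prod.ext_iff.mp h).1
      · show d₁ p₁.1 * d₂ jq' = _
        rw [hjq', hbq, mul_inv, inv_inv, hcusq, ← mul_assoc]
      · show d₁ q.1 * d₂ j₁' = _
        rw [hj₁', hb₁, mul_inv, inv_inv, hcusq, ← mul_assoc,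
          mul_comm (d₁ q.1) (d₁ p₁.1)]
    have h1 : d₁ p₁.1 * d₁ q.1 = 1 := by
      have : d₁ p₁.1 * d₁ q.1 * cu = 1 * cu := by rw [hv, one_mul]
      exact mul_right_cancel this
    exact eq_inv_of_mul_eq_one_left (by rw [mul_comm]; exact h1)
  have h2' : d₁ p₂.1 = (d₁ p₁.1)⁻¹ := key p₂ (Ne.symm h12) hp₂
  have h3' : d₁ p₃.1 = (d₁ p₁.1)⁻¹ := key p₃ (Ne.symm h13) hp₃
  exact hi23 (hinj₁ (h2'.trans h3'.symm))
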